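/- The classes of ρ¹, ρ², ρ³, ρ⁴ are linearly independent modulo coboundaries: if a linear combination c₁ρ¹ + c₂ρ² + c₃ρ³ + c₄ρ⁴ equals the coboundary A ↦ [M,A] for some M ∈ gl(3,K), then c₁ = c₂ = c₃ = c₄ = 0. -/

import Mathlib

/-! A coboundary `A ↦ [M, A]` sends `e_{ij}` to a matrix supported on row `i` and column `j`,
whereas at `X = e₂₁` the combination has entries `c₁` at `(3,2)` and `c₄` at `(3,3)`, and at
`Z = e₃₂` it has entries `c₂` at `(2,1)` and `c₃` at `(1,1)`; all four lie off the relevant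
row and column, so all four coefficients vanish. -/

open Matrix

variable (K : Type*) [Field K]

/-- `gl(3,K)`, the Lie algebra of all 3×3 matrices with the commutator bracket. -/
abbrev gl3 (K : Type*) [Field K] := Matrix (Fin 3) (Fin 3) K

/-- The elementary matrix `e_{ij}` (indices 0-based). -/
def E (i j : Fin 3) : gl3 K := Matrix.single i j 1

/-- The set of strictly lower triangular 3×3 matrices: the Heisenberg algebra `h₁`. -/
def lowerTri : Set (gl3 K) := {A | ∀ i j : Fin 3, i ≤ j → A i j = 0}

/-- The cocycle `ρ¹`: `X ↦ e₃₂`, `Y, Z ↦ 0` (read off via the `X`-coordinate `A 1 0`). -/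
def rho1 (A : gl3 K) : gl3 K := A 1 0 • E K 2 1

/-- The cocycle `ρ²`: `Z ↦ e₂₁`, `X, Y ↦ 0`. -/
def rho2 (A : gl3 K) : gl3 K := A 2 1 • E K 1 0

/-- The cocycle `ρ³`: `Y ↦ e₂₁`, `Z ↦ 2e₂₂ + e₁₁`, `X ↦ 0`. -/
def rho3 (A : gl3 K) : gl3 K := A 2 0 • E K 1 0 + A 2 1 • ((2 : K) • E K 1 1 + E K 0 0)

/-- The cocycle `ρ⁴`: `X ↦ I`, `Y, Z ↦ 0`. -/
def rho4 (A : gl3 K) : gl3 K := A 1 0 • (1 : gl3 K)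

theorem Matrix.commutator_single_apply_of_ne {n R : Type*} [Fintype n] [DecidableEq n]
    [NonUnitalNonAssocRing R] (M : Matrix n n R) (c : R) {i j k l : n}
    (hki : k ≠ i) (hlj : l ≠ j) : (M * single i j c - single i j c * M) k l = 0 := by
  rw [sub_apply, mul_single_apply_of_ne _ _ _ _ _ hlj, single_mul_apply_of_ne _ _ _ _ _ hki,
    sub_zero]

theorem E_mem_lowerTri {i j : Fin 3} (h : j < i) : E K i j ∈ lowerTri K := by
  intro k l hkl
  refine single_apply_of_ne _ _ _ _ _ ?_
  rintro ⟨rfl, rfl⟩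
  exact hkl.not_gt h

/-- The classes of `ρ¹, ρ², ρ³, ρ⁴` are linearly independent modulo coboundaries. -/
theorem cocycles_independent_mod_coboundaries :
    ∀ (c1 c2 c3 c4 : K) (M : gl3 K),
      (∀ A ∈ lowerTri K,
        c1 • rho1 K A + c2 • rho2 K A + c3 • rho3 K A + c4 • rho4 K A = M * A - A * M) →
      c1 = 0 ∧ c2 = 0 ∧ c3 = 0 ∧ c4 = 0 := by
  intro c1 c2 c3 c4 M h
  have entry_eq_zero : ∀ {i j : Fin 3} (k l : Fin 3), j < i → k ≠ i → l ≠ j →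
      (c1 • rho1 K (E K i j) + c2 • rho2 K (E K i j) + c3 • rho3 K (E K i j) +
        c4 • rho4 K (E K i j)) k l = 0 := fun k l hji hki hlj => by
    rw [h _ (E_mem_lowerTri K hji)]
    exact commutator_single_apply_of_ne M 1 hki hlj
  have hc1 := entry_eq_zero (i := 1) (j := 0) 2 1 (by decide) (by decide) (by decide)
  have hc4 := entry_eq_zero (i := 1) (j := 0) 2 2 (by decide) (by decide) (by decide)
  have hc2 := entry_eq_zero (i := 2) (j := 1) 1 0 (by decide) (by decide) (by decide)
  have hc3 := entry_eq_zero (i := 2) (j := 1) 0 0 (by decide) (by decide) (by decide)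
  simp [rho1, rho2, rho3, rho4, E] at hc1 hc2 hc3 hc4
  exact ⟨hc1, hc2, hc3, hc4⟩
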